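/- arXiv:2403.00119 — 4 statements merged into one kernel-verified Lean document; each statement's English description precedes it below -/
import Mathlib

section
/- Let u be a smooth complex-valued solution of the equation i∂ₜu ± 2D Π(|u|²)u = 0 on ℝ, where D = -i∂ₓ and Π is the Szegő projector. Then v := |u|² solves the inviscid Burgers equation ∂ₜv = ±2v ∂ₓv. -/
/-!
Since `|u|²` is real, `Π(|u|²) + conj Π(|u|²) = |u|²`, so `∂ₓ|u|² = 2 Re ∂ₓΠ(|u|²)`.
The equation says `∂ₜu = ±2 ∂ₓΠ(|u|²) u`, hence
`∂ₜ|u|² = 2 Re(conj u ∂ₜu) = ±4 |u|² Re ∂ₓΠ(|u|²) = ±2 |u|² ∂ₓ|u|²`.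
-/

open ComplexConjugate

theorem HasDerivAt.of_add_conj_eq {P : ℝ → ℂ} {P' : ℂ} {g : ℝ → ℝ} {x : ℝ}
    (hP : HasDerivAt P P' x) (hg : ∀ ξ, P ξ + conj (P ξ) = g ξ) :
    HasDerivAt g (2 * P'.re) x := by
  have hg_re : g = fun ξ => 2 * (P ξ).re := by
    funext ξ
    exact_mod_cast (hg ξ).symm.trans (Complex.add_conj (P ξ))
  rw [hg_re]
  exact (Complex.reCLM.hasFDerivAt.comp_hasDerivAt x hP).const_mul 2

theorem Complex.real_inner_mul_self_right (z a : ℂ) :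
    inner ℝ z (a * z) = a.re * ‖z‖ ^ 2 := by
  rw [Complex.inner, mul_assoc, Complex.mul_conj, Complex.normSq_eq_norm_sq]
  exact_mod_cast Complex.re_mul_ofReal _ _

/-- `P` stands for `Π(|u|²)` and `Px` for its spatial derivative; `hSzego` is the identity
`Π f + conj (Π f) = f` for the real function `f = |u|²`. -/
theorem stmt_0_general (σ : ℝ)
    (u ut : ℝ → ℝ → ℂ) (P Px : ℝ → ℝ → ℂ)
    (hut : ∀ t x, HasDerivAt (fun τ => u τ x) (ut t x) t)
    (hPx : ∀ t x, HasDerivAt (fun ξ => P t ξ) (Px t x) x)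
    (hSzego : ∀ t x, P t x + (starRingEnd ℂ) (P t x) = ((‖u t x‖ ^ 2 : ℝ) : ℂ))
    (heq : ∀ t x, Complex.I * ut t x
      + (σ : ℂ) * 2 * (-Complex.I * Px t x) * u t x = 0) :
    ∀ t x, HasDerivAt (fun τ => ‖u τ x‖ ^ 2)
      (σ * 2 * ‖u t x‖ ^ 2 * deriv (fun ξ => ‖u t ξ‖ ^ 2) x) t := by
  intro t x
  have hdx : deriv (fun ξ => ‖u t ξ‖ ^ 2) x = 2 * (Px t x).re :=
    ((hPx t x).of_add_conj_eq (hSzego t)).deriv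
  have hut_eq : ut t x = (σ * 2 * Px t x) * u t x := by
    linear_combination (-Complex.I) * heq t x + (ut t x - σ * 2 * Px t x * u t x) * Complex.I_sq
  convert (hut t x).norm_sq using 1
  rw [hdx, hut_eq, Complex.real_inner_mul_self_right]
  simp only [Complex.mul_re, Complex.mul_im, Complex.ofReal_re, Complex.ofReal_im, Complex.re_ofNat,
    Complex.im_ofNat]
  ring

/-- If `u` is a smooth solution of `i∂ₜu ± 2DΠ(|u|²)u = 0` (where `D = -i∂ₓ`, `Π` the
Szegő projector, `P = Π(|u|²)`, with `Px` its spatial derivative, and `P + conj P = |u|²`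
since `|u|²` is real-valued), then `v = |u|²` solves the Burgers equation `∂ₜv = ±2v ∂ₓv`. -/
theorem stmt_0 (σ : ℝ) (hσ : σ = 1 ∨ σ = -1)
    (u ut ux : ℝ → ℝ → ℂ) (P Px : ℝ → ℝ → ℂ)
    (hut : ∀ t x, HasDerivAt (fun τ => u τ x) (ut t x) t)
    (hux : ∀ t x, HasDerivAt (fun ξ => u t ξ) (ux t x) x)
    (hPx : ∀ t x, HasDerivAt (fun ξ => P t ξ) (Px t x) x)
    (hSzego : ∀ t x, P t x + (starRingEnd ℂ) (P t x) = ((‖u t x‖ ^ 2 : ℝ) : ℂ))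
    (heq : ∀ t x, Complex.I * ut t x
      + (σ : ℂ) * 2 * (-Complex.I * Px t x) * u t x = 0) :
    ∀ t x, HasDerivAt (fun τ => ‖u τ x‖ ^ 2)
      (σ * 2 * ‖u t x‖ ^ 2 * deriv (fun ξ => ‖u t ξ‖ ^ 2) x) t :=
  stmt_0_general σ u ut P Px hut hPx hSzego heq
end

section
/- For a > 0, the function f(y) = ∫₀^∞ (1/s) log(((y+s)²+a²)/((y−s)²+a²)) ds satisfies f'(y) = 2πa/(y² + a²) and f(0) = 0. -/
/-!
Differentiate under the integral sign. For `|y| ≤ M` the `y`-derivative of the integrand,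
`4 (a² + s² − y²) / (((y + s)² + a²) ((y − s)² + a²))`, is dominated by a multiple of
`(1 + s²)⁻¹`, and by the mean value theorem from `y = 0`, where the integrand vanishes, so is
the integrand itself. Partial fractions give the derivative kernel an elementary primitive in `s`
made of two arctangents and a logarithm; it vanishes at `s = 0` and tends to `2πa / (y² + a²)`
as `s → ∞`.
-/

open Real MeasureTheory Set Filter Topology

noncomputable section

def logKernel (a y s : ℝ) : ℝ :=
  (1 / s) * log (((y + s) ^ 2 + a ^ 2) / ((y - s) ^ 2 + a ^ 2))

def logKernelDeriv (a y s : ℝ) : ℝ :=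
  4 * (a ^ 2 + s ^ 2 - y ^ 2) / (((y + s) ^ 2 + a ^ 2) * ((y - s) ^ 2 + a ^ 2))

def logKernelDerivPrimitive (a y s : ℝ) : ℝ :=
  (2 * a * (arctan ((s + y) / a) + arctan ((s - y) / a))
    - y * (log ((s + y) ^ 2 + a ^ 2) - log ((s - y) ^ 2 + a ^ 2))) / (y ^ 2 + a ^ 2)

end

section

variable {a : ℝ}

lemma logKernel_zero_left (a s : ℝ) : logKernel a 0 s = 0 := by
  simp [logKernel, sq, ← neg_sub s 0]

lemma logKernel_zero_right (a y : ℝ) : logKernel a y 0 = 0 := by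
  simp [logKernel]

lemma hasDerivAt_log_sq_add_sq (ha : a ≠ 0) (c x : ℝ) :
    HasDerivAt (fun x => log ((x + c) ^ 2 + a ^ 2)) (2 * (x + c) / ((x + c) ^ 2 + a ^ 2)) x := by
  have hpos : (x + c) ^ 2 + a ^ 2 ≠ 0 := by positivity
  simpa using (((hasDerivAt_id x).add_const c).pow 2).add_const (a ^ 2) |>.log hpos

lemma hasDerivAt_logKernel (ha : a ≠ 0) {s : ℝ} (hs : s ≠ 0) (y : ℝ) :
    HasDerivAt (logKernel a · s) (logKernelDeriv a y s) y := by
  have hP : ∀ y, (y + s) ^ 2 + a ^ 2 ≠ 0 := fun y => by positivity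
  have hQ : ∀ y, (y - s) ^ 2 + a ^ 2 ≠ 0 := fun y => by positivity
  have hlogQ := hasDerivAt_log_sq_add_sq ha (-s) y
  simp only [← sub_eq_add_neg] at hlogQ
  have h := ((hasDerivAt_log_sq_add_sq ha s y).sub hlogQ).const_mul (1 / s)
  have hfun : (logKernel a · s) =
      fun y => 1 / s * (log ((y + s) ^ 2 + a ^ 2) - log ((y - s) ^ 2 + a ^ 2)) := by
    funext y
    rw [logKernel, log_div (hP y) (hQ y)]
  rw [hfun]
  refine h.congr_deriv ?_
  rw [logKernelDeriv]
  field_simp [hP y, hQ y]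
  ring

lemma one_add_sq_le_mul_sq_add_sq (ha : a ≠ 0) {M z : ℝ} (hz : |z| ≤ M) (s : ℝ) :
    1 + s ^ 2 ≤ (2 + (2 * M ^ 2 + 1) / a ^ 2) * ((z + s) ^ 2 + a ^ 2) := by
  have ha2 : 0 < a ^ 2 := by positivity
  have hzM : z ^ 2 ≤ M ^ 2 := sq_le_sq' (abs_le.1 hz).1 (abs_le.1 hz).2
  -- `2 (z + s)² + 2 z² - s² = (2 z + s)²`
  calc 1 + s ^ 2 ≤ 2 * ((z + s) ^ 2 + a ^ 2) + (2 * M ^ 2 + 1) / a ^ 2 * a ^ 2 := by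
        rw [div_mul_cancel₀ _ ha2.ne']
        nlinarith [sq_nonneg (2 * z + s)]
    _ ≤ 2 * ((z + s) ^ 2 + a ^ 2) + (2 * M ^ 2 + 1) / a ^ 2 * ((z + s) ^ 2 + a ^ 2) := by
        gcongr
        exact le_add_of_nonneg_left (sq_nonneg _)
    _ = _ := by ring

lemma inv_sq_add_sq_le (ha : a ≠ 0) {M z : ℝ} (hz : |z| ≤ M) (s : ℝ) :
    ((z + s) ^ 2 + a ^ 2)⁻¹ ≤ (2 + (2 * M ^ 2 + 1) / a ^ 2) * (1 + s ^ 2)⁻¹ := by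
  have hP : 0 < (z + s) ^ 2 + a ^ 2 := by positivity
  rw [← div_eq_mul_inv, le_div_iff₀ (by positivity), ← div_eq_inv_mul, div_le_iff₀ hP]
  simpa [mul_comm] using one_add_sq_le_mul_sq_add_sq ha hz s

lemma abs_logKernelDeriv_le (ha : a ≠ 0) {M y : ℝ} (hy : |y| ≤ M) (s : ℝ) :
    |logKernelDeriv a y s| ≤ 4 * (2 + (2 * M ^ 2 + 1) / a ^ 2) * (1 + s ^ 2)⁻¹ := by
  have hP : 0 < (y + s) ^ 2 + a ^ 2 := by positivity
  have hQ : 0 < (y - s) ^ 2 + a ^ 2 := by positivity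
  have hP' := inv_sq_add_sq_le ha hy s
  have hQ' := inv_sq_add_sq_le ha (M := M) (z := -y) (by rwa [abs_neg]) s
  rw [show (-y + s) ^ 2 = (y - s) ^ 2 by ring] at hQ'
  have hnum : |4 * (a ^ 2 + s ^ 2 - y ^ 2)| ≤
      2 * ((y + s) ^ 2 + a ^ 2) + 2 * ((y - s) ^ 2 + a ^ 2) := by
    rw [abs_le]; constructor <;> nlinarith [sq_nonneg y, sq_nonneg s, sq_nonneg a]
  calc |logKernelDeriv a y s|
      = |4 * (a ^ 2 + s ^ 2 - y ^ 2)| / (((y + s) ^ 2 + a ^ 2) * ((y - s) ^ 2 + a ^ 2)) := by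
        rw [logKernelDeriv, abs_div, abs_of_pos (mul_pos hP hQ)]
    _ ≤ (2 * ((y + s) ^ 2 + a ^ 2) + 2 * ((y - s) ^ 2 + a ^ 2)) /
          (((y + s) ^ 2 + a ^ 2) * ((y - s) ^ 2 + a ^ 2)) := by gcongr
    _ = 2 * ((y - s) ^ 2 + a ^ 2)⁻¹ + 2 * ((y + s) ^ 2 + a ^ 2)⁻¹ := by
        field_simp
    _ ≤ _ := by linarith

lemma abs_logKernel_le (ha : a ≠ 0) {M y : ℝ} (hy : |y| ≤ M) (s : ℝ) :
    |logKernel a y s| ≤ 4 * (2 + (2 * M ^ 2 + 1) / a ^ 2) * (1 + s ^ 2)⁻¹ * |y| := by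
  rcases eq_or_ne s 0 with rfl | hs
  · rw [logKernel_zero_right, abs_zero]
    positivity
  have hsegment : ∀ t ∈ Icc (-M) M, |t| ≤ M := fun t ht => abs_le.2 ht
  have h := (convex_Icc (-M) M).norm_image_sub_le_of_norm_hasDerivWithin_le
    (fun t _ => (hasDerivAt_logKernel ha hs t).hasDerivWithinAt)
    (fun t ht => abs_logKernelDeriv_le ha (hsegment t ht) s)
    (x := 0) (y := y) ⟨by linarith [abs_nonneg y], by linarith [abs_nonneg y]⟩ (abs_le.1 hy)
  simpa [logKernel_zero_left] using h

lemma integrable_logKernelDeriv (ha : a ≠ 0) (y : ℝ) : Integrable (logKernelDeriv a y) :=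
  (integrable_inv_one_add_sq.const_mul _).mono'
    (Measurable.aestronglyMeasurable (by unfold logKernelDeriv; fun_prop))
    (Eventually.of_forall (abs_logKernelDeriv_le ha le_rfl))

lemma integrable_logKernel (ha : a ≠ 0) (y : ℝ) : Integrable (logKernel a y) :=
  ((integrable_inv_one_add_sq.const_mul _).mul_const |y|).mono'
    (Measurable.aestronglyMeasurable (by unfold logKernel; fun_prop))
    (Eventually.of_forall (abs_logKernel_le ha le_rfl))

lemma hasDerivAt_integral_logKernel (ha : a ≠ 0) (S : Set ℝ) (y₀ : ℝ) :
    HasDerivAt (fun y => ∫ s in S, logKernel a y s)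
      (∫ s in S, logKernelDeriv a y₀ s) y₀ := by
  set M := |y₀| + 1
  have hM : Icc (-M) M ∈ 𝓝 y₀ :=
    Icc_mem_nhds (by linarith [neg_abs_le y₀]) (by linarith [le_abs_self y₀])
  refine (hasDerivAt_integral_of_dominated_loc_of_deriv_le hM
    (Eventually.of_forall fun y => (integrable_logKernel ha y).aestronglyMeasurable.restrict)
    (integrable_logKernel ha y₀).restrict
    (integrable_logKernelDeriv ha y₀).aestronglyMeasurable.restrict
    (ae_restrict_of_ae (Eventually.of_forall fun s y hy =>
      abs_logKernelDeriv_le ha (abs_le.2 hy) s))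
    ((integrable_inv_one_add_sq.const_mul _).restrict)
    (ae_restrict_of_ae ((Measure.ae_ne volume 0).mono fun s hs y _ =>
      hasDerivAt_logKernel ha hs y))).2

lemma hasDerivAt_logKernelDerivPrimitive (ha : a ≠ 0) (y s : ℝ) :
    HasDerivAt (logKernelDerivPrimitive a y) (logKernelDeriv a y s) s := by
  have harctan : ∀ c,
      HasDerivAt (fun s => arctan ((s + c) / a)) (a / ((s + c) ^ 2 + a ^ 2)) s := by
    intro c
    have hc : (s + c) ^ 2 + a ^ 2 ≠ 0 := by positivity
    refine (((hasDerivAt_id' s).add_const c).div_const a).arctan.congr_deriv ?_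
    field_simp
    ring
  have harctanQ := harctan (-y)
  have hlogQ := hasDerivAt_log_sq_add_sq ha (-y) s
  simp only [← sub_eq_add_neg] at harctanQ hlogQ
  have h := ((((harctan y).add harctanQ).const_mul (2 * a)).sub
    (((hasDerivAt_log_sq_add_sq ha y s).sub hlogQ).const_mul y)).div_const (y ^ 2 + a ^ 2)
  refine h.congr_deriv ?_
  have hP : (s + y) ^ 2 + a ^ 2 ≠ 0 := by positivity
  have hQ : (s - y) ^ 2 + a ^ 2 ≠ 0 := by positivity
  have hya : y ^ 2 + a ^ 2 ≠ 0 := by positivity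
  rw [logKernelDeriv]
  field_simp
  ring

lemma logKernelDerivPrimitive_zero (a y : ℝ) : logKernelDerivPrimitive a y 0 = 0 := by
  simp [logKernelDerivPrimitive, neg_div, sq]

lemma tendsto_sq_add_sq_div_sq_add_sq_atTop (ha : a ≠ 0) (y : ℝ) :
    Tendsto (fun s => ((s + y) ^ 2 + a ^ 2) / ((s - y) ^ 2 + a ^ 2)) atTop (𝓝 1) := by
  have hcont : ContinuousAt
      (fun t : ℝ => ((1 + y * t) ^ 2 + (a * t) ^ 2) / ((1 - y * t) ^ 2 + (a * t) ^ 2)) 0 := by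
    fun_prop (disch := norm_num)
  have h := hcont.tendsto.comp tendsto_inv_atTop_zero
  norm_num at h
  refine h.congr' ((eventually_gt_atTop 0).mono fun s hs => ?_)
  have hQ : (s - y) ^ 2 + a ^ 2 ≠ 0 := by positivity
  have hQ' : (1 - y * s⁻¹) ^ 2 + (a * s⁻¹) ^ 2 ≠ 0 := by
    have : a * s⁻¹ ≠ 0 := mul_ne_zero ha (inv_ne_zero hs.ne')
    positivity
  simp only [Function.comp_apply]
  rw [div_eq_div_iff hQ' hQ]
  field_simp

lemma tendsto_logKernelDerivPrimitive_atTop (ha : 0 < a) (y : ℝ) :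
    Tendsto (logKernelDerivPrimitive a y) atTop (𝓝 (2 * π * a / (y ^ 2 + a ^ 2))) := by
  have harctan : ∀ c, Tendsto (fun s => arctan ((s + c) / a)) atTop (𝓝 (π / 2)) := fun c =>
    tendsto_arctan_atTop.mono_right nhdsWithin_le_nhds |>.comp
      ((tendsto_atTop_add_const_right _ c tendsto_id).atTop_div_const ha)
  have harctanQ := harctan (-y)
  simp only [← sub_eq_add_neg] at harctanQ
  have hlog : Tendsto (fun s => log ((s + y) ^ 2 + a ^ 2) - log ((s - y) ^ 2 + a ^ 2))
      atTop (𝓝 0) := by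
    have hP : ∀ s, (s + y) ^ 2 + a ^ 2 ≠ 0 := fun s => by positivity
    have hQ : ∀ s, (s - y) ^ 2 + a ^ 2 ≠ 0 := fun s => by positivity
    simpa [← log_div (hP _) (hQ _), Function.comp_def] using
      (continuousAt_log one_ne_zero).tendsto.comp
        (tendsto_sq_add_sq_div_sq_add_sq_atTop ha.ne' y)
  have h := ((((harctan y).add harctanQ).const_mul (2 * a)).sub (hlog.const_mul y)).div_const
    (y ^ 2 + a ^ 2)
  rwa [show (2 * a * (π / 2 + π / 2) - y * 0) / (y ^ 2 + a ^ 2) = 2 * π * a / (y ^ 2 + a ^ 2) by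
    ring] at h

lemma integral_Ioi_logKernelDeriv (ha : 0 < a) (y : ℝ) :
    ∫ s in Ioi 0, logKernelDeriv a y s = 2 * π * a / (y ^ 2 + a ^ 2) := by
  rw [integral_Ioi_of_hasDerivAt_of_tendsto'
    (fun s _ => hasDerivAt_logKernelDerivPrimitive ha.ne' y s)
    (integrable_logKernelDeriv ha.ne' y).integrableOn
    (tendsto_logKernelDerivPrimitive_atTop ha y), logKernelDerivPrimitive_zero, sub_zero]

end

/-- For `a > 0`, the function `f(y) = ∫₀^∞ (1/s) log(((y+s)²+a²)/((y−s)²+a²)) ds`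
satisfies `f'(y) = 2πa/(y²+a²)` and `f(0) = 0`. -/
theorem stmt_3 (a : ℝ) (ha : 0 < a) :
    (∀ y : ℝ, HasDerivAt
        (fun y : ℝ => ∫ s in Set.Ioi (0 : ℝ),
          (1 / s) * Real.log (((y + s) ^ 2 + a ^ 2) / ((y - s) ^ 2 + a ^ 2)))
        (2 * Real.pi * a / (y ^ 2 + a ^ 2)) y) ∧
      (∫ s in Set.Ioi (0 : ℝ),
        (1 / s) * Real.log (((0 + s) ^ 2 + a ^ 2) / ((0 - s) ^ 2 + a ^ 2))) = 0 := by
  refine ⟨fun y => ?_, ?_⟩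
  · rw [← integral_Ioi_logKernelDeriv ha y]
    exact hasDerivAt_integral_logKernel ha.ne' (Ioi 0) y
  · show ∫ s in Ioi 0, logKernel a 0 s = 0
    simp only [logKernel_zero_left, integral_zero]
end

section
/- For a > 0 and s ∈ ℝ, the integral over the real line ∫_{-∞}^{∞} 2(a² + z² − y²) / (((y+z)² + a²)((y−z)² + a²)) dz equals 2πa/(y² + a²). -/
/-!
With `w = y + i a`, the integrand is `2 Re (z² - w²)⁻¹`, whose partial fractions give the
arctangent-logarithm primitive `integrandPrimitive`. Its logarithmic part tends to `0` at `±∞`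
and each arctangent to `±π / 2`, so the integral is `2πa / (y² + a²)`. Integrability comes from
`2 |a² + z² - y²| ≤ ((z + y)² + a²) + ((z - y)² + a²)`.
-/

open Real Filter MeasureTheory Topology Bornology

lemma tendsto_div_add_sq_add_sq_cobounded (a c d : ℝ) :
    Tendsto (fun z => ((z + c) ^ 2 + a ^ 2) / ((z + d) ^ 2 + a ^ 2)) (cobounded ℝ) (𝓝 1) := by
  set φ : ℝ → ℝ := fun w => ((1 + c * w) ^ 2 + (a * w) ^ 2) / ((1 + d * w) ^ 2 + (a * w) ^ 2)
  have hφ : ContinuousAt φ 0 := ContinuousAt.div (by fun_prop) (by fun_prop) (by norm_num)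
  have h := hφ.tendsto.comp tendsto_inv₀_cobounded
  rw [show φ 0 = 1 by norm_num [φ]] at h
  refine h.congr' ?_
  filter_upwards [eventually_ne_cobounded 0] with z hz
  simp only [Function.comp_apply, φ]
  field_simp

section

variable {a : ℝ}

lemma integrable_inv_add_sq_add_sq (c : ℝ) (ha : a ≠ 0) :
    Integrable fun z : ℝ => ((z + c) ^ 2 + a ^ 2)⁻¹ := by
  refine (((integrable_inv_one_add_sq.comp_div ha).comp_add_right c).const_mul (a ^ 2)⁻¹).congr
    (ae_of_all _ fun z => ?_)
  field_simp
  ring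

lemma hasDerivAt_arctan_add_div (c z : ℝ) (ha : a ≠ 0) :
    HasDerivAt (fun z => arctan ((z + c) / a)) (a / ((z + c) ^ 2 + a ^ 2)) z := by
  have h : HasDerivAt (fun z => (z + c) / a) (1 / a) z :=
    ((hasDerivAt_id' z).add_const c).div_const a
  convert h.arctan using 1
  field_simp
  ring

lemma hasDerivAt_log_add_sq_add_sq (c z : ℝ) (ha : a ≠ 0) :
    HasDerivAt (fun z => log ((z + c) ^ 2 + a ^ 2)) (2 * (z + c) / ((z + c) ^ 2 + a ^ 2)) z := by
  have h : HasDerivAt (fun z => (z + c) ^ 2 + a ^ 2) (2 * (z + c)) z := by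
    simpa using (((hasDerivAt_id' z).add_const c).pow 2).add_const (a ^ 2)
  exact h.log (by positivity)

lemma tendsto_arctan_add_div_atTop (c : ℝ) (ha : 0 < a) :
    Tendsto (fun z => arctan ((z + c) / a)) atTop (𝓝 (π / 2)) :=
  (tendsto_arctan_atTop.mono_right nhdsWithin_le_nhds).comp
    ((tendsto_atTop_add_const_right _ c tendsto_id).atTop_div_const ha)

lemma tendsto_arctan_add_div_atBot (c : ℝ) (ha : 0 < a) :
    Tendsto (fun z => arctan ((z + c) / a)) atBot (𝓝 (-(π / 2))) :=
  (tendsto_arctan_atBot.mono_right nhdsWithin_le_nhds).comp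
    ((tendsto_atBot_add_const_right _ c tendsto_id).atBot_div_const ha)

lemma tendsto_log_sub_log_cobounded (c d : ℝ) (ha : a ≠ 0) :
    Tendsto (fun z => log ((z + c) ^ 2 + a ^ 2) - log ((z + d) ^ 2 + a ^ 2))
      (cobounded ℝ) (𝓝 0) := by
  have h := ((continuousAt_log one_ne_zero).tendsto).comp
    (tendsto_div_add_sq_add_sq_cobounded a c d)
  rw [log_one] at h
  refine h.congr fun z => ?_
  rw [Function.comp_apply, log_div (by positivity) (by positivity)]

lemma abs_integrand_le (y z : ℝ) (ha : a ≠ 0) :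
    |2 * (a ^ 2 + z ^ 2 - y ^ 2) / (((y + z) ^ 2 + a ^ 2) * ((y - z) ^ 2 + a ^ 2))|
      ≤ ((z + y) ^ 2 + a ^ 2)⁻¹ + ((z - y) ^ 2 + a ^ 2)⁻¹ := by
  have hD : 0 < ((y + z) ^ 2 + a ^ 2) * ((y - z) ^ 2 + a ^ 2) := by positivity
  rw [abs_div, abs_of_pos hD, abs_mul, abs_two, div_le_iff₀ hD]
  calc 2 * |a ^ 2 + z ^ 2 - y ^ 2| ≤ ((z + y) ^ 2 + a ^ 2) + ((z - y) ^ 2 + a ^ 2) := by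
        cases abs_cases (a ^ 2 + z ^ 2 - y ^ 2) <;> nlinarith [sq_nonneg z, sq_nonneg y]
    _ = _ := by field_simp; ring

lemma integrable_integrand (y : ℝ) (ha : a ≠ 0) :
    Integrable fun z : ℝ =>
      2 * (a ^ 2 + z ^ 2 - y ^ 2) / (((y + z) ^ 2 + a ^ 2) * ((y - z) ^ 2 + a ^ 2)) := by
  refine ((integrable_inv_add_sq_add_sq y ha).add
    (by simpa only [sub_eq_add_neg] using integrable_inv_add_sq_add_sq (-y) ha)).mono' ?_
    (ae_of_all _ fun z => abs_integrand_le y z ha)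
  exact (Continuous.div (by fun_prop) (by fun_prop) fun z => by positivity).aestronglyMeasurable

noncomputable def integrandPrimitive (a y z : ℝ) : ℝ :=
  (a * (arctan ((z + y) / a) + arctan ((z - y) / a))
    - y / 2 * (log ((z + y) ^ 2 + a ^ 2) - log ((z - y) ^ 2 + a ^ 2))) / (y ^ 2 + a ^ 2)

lemma hasDerivAt_integrandPrimitive (y z : ℝ) (ha : a ≠ 0) :
    HasDerivAt (integrandPrimitive a y)
      (2 * (a ^ 2 + z ^ 2 - y ^ 2) / (((y + z) ^ 2 + a ^ 2) * ((y - z) ^ 2 + a ^ 2))) z := by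
  have h := ((((hasDerivAt_arctan_add_div y z ha).add
    (hasDerivAt_arctan_add_div (-y) z ha)).const_mul a).sub
    (((hasDerivAt_log_add_sq_add_sq y z ha).sub
    (hasDerivAt_log_add_sq_add_sq (-y) z ha)).const_mul (y / 2))).div_const (y ^ 2 + a ^ 2)
  -- `z - y` and `z + -y` are definitionally equal, so `h` is about `integrandPrimitive a y`.
  refine HasDerivAt.congr_deriv (f := integrandPrimitive a y) h ?_
  field_simp
  ring

lemma tendsto_integrandPrimitive_atTop (y : ℝ) (ha : 0 < a) :
    Tendsto (integrandPrimitive a y) atTop (𝓝 (π * a / (y ^ 2 + a ^ 2))) := by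
  rw [show π * a = a * (π / 2 + π / 2) - y / 2 * 0 by ring]
  exact ((((tendsto_arctan_add_div_atTop y ha).add
    (tendsto_arctan_add_div_atTop (-y) ha)).const_mul a).sub
    (((tendsto_log_sub_log_cobounded y (-y) ha.ne').mono_left
    IsOrderBornology.atTop_le_cobounded).const_mul (y / 2))).div_const (y ^ 2 + a ^ 2)

lemma tendsto_integrandPrimitive_atBot (y : ℝ) (ha : 0 < a) :
    Tendsto (integrandPrimitive a y) atBot (𝓝 (-(π * a) / (y ^ 2 + a ^ 2))) := by
  rw [show -(π * a) = a * (-(π / 2) + -(π / 2)) - y / 2 * 0 by ring]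
  exact ((((tendsto_arctan_add_div_atBot y ha).add
    (tendsto_arctan_add_div_atBot (-y) ha)).const_mul a).sub
    (((tendsto_log_sub_log_cobounded y (-y) ha.ne').mono_left
    IsOrderBornology.atBot_le_cobounded).const_mul (y / 2))).div_const (y ^ 2 + a ^ 2)

end

/-- For `a > 0` and `y ∈ ℝ`,
`∫_{-∞}^{∞} 2(a²+z²−y²)/(((y+z)²+a²)((y−z)²+a²)) dz = 2πa/(y²+a²)`. -/
theorem stmt_4 (a y : ℝ) (ha : 0 < a) :
    (∫ z : ℝ, 2 * (a ^ 2 + z ^ 2 - y ^ 2) / (((y + z) ^ 2 + a ^ 2) * ((y - z) ^ 2 + a ^ 2)))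
      = 2 * Real.pi * a / (y ^ 2 + a ^ 2) := by
  rw [integral_of_hasDerivAt_of_tendsto (hasDerivAt_integrandPrimitive y · ha.ne')
    (integrable_integrand y ha.ne') (tendsto_integrandPrimitive_atBot y ha)
    (tendsto_integrandPrimitive_atTop y ha)]
  ring
end

section
/- Let u₀: ℝ → ℂ be a C¹ function tending to 0 at infinity with bounded derivative, and fix t ∈ ℝ. Define γₜ(y) = y ∓ 2t|u₀(y)|². Then for every x ∈ ℝ that is not a critical value of γₜ, the equation γₜ(y) = x has a finite, odd number of real solutions, each simple; moreover the set of critical values of γₜ is compact and has Lebesgue measure zero. -/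
open Filter MeasureTheory Set Topology SignType

/-!
Since `u₀` is bounded, `γₜ` is a bounded perturbation of the identity, and its derivative
`1 ∓ 4t⟪u₀, u₀'⟫` tends to `1` at infinity because `u₀ → 0` while `u₀'` stays bounded. Hence the
critical points of `γₜ` form a compact set, and so do the critical values; these are null by
Sard's lemma. For a regular value `x`, the solutions of `γₜ(y) = x` lie in a bounded interval
`(a, b)` with `γₜ(a) < x < γₜ(b)`. They are isolated, hence finitely many, and `γₜ - x` changes
sign at each of them, so their number is odd.
-/

section SignChanges

variable {f : ℝ → ℝ}

lemma SignType.eq_iff_ne_neg {x y : SignType} (hx : x ≠ 0) (hy : y ≠ 0) : x = y ↔ x ≠ -y := by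
  decide +revert

lemma sign_eq_sign_of_forall_mem_Ioo_ne_zero {a b : ℝ} (hab : a ≤ b)
    (hc : ContinuousOn f (Icc a b)) (ha : f a ≠ 0) (hb : f b ≠ 0)
    (hne : ∀ y ∈ Ioo a b, f y ≠ 0) : sign (f a) = sign (f b) := by
  rcases ha.lt_or_gt with ha | ha <;> rcases hb.lt_or_gt with hb | hb
  · rw [sign_neg ha, sign_neg hb]
  · obtain ⟨y, hy, hy0⟩ := intermediate_value_Ioo hab hc ⟨ha, hb⟩
    exact absurd hy0 (hne y hy)
  · obtain ⟨y, hy, hy0⟩ := intermediate_value_Ioo' hab hc ⟨hb, ha⟩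
    exact absurd hy0 (hne y hy)
  · rw [sign_pos ha, sign_pos hb]

lemma eventually_sign_eq_of_deriv_ne_zero {m : ℝ} (hm : f m = 0) (hd : deriv f m ≠ 0) :
    ∀ᶠ y in 𝓝 m, sign (f y) = sign (deriv f m) * sign (y - m) := by
  rcases hd.lt_or_gt with hd | hd
  · filter_upwards [eventually_nhdsWithin_sign_eq_of_deriv_neg hd hm] with y hy
    rw [hy, sign_neg hd, ← neg_sub, Left.sign_neg, neg_one_mul]
  · filter_upwards [eventually_nhdsWithin_sign_eq_of_deriv_pos hd hm] with y hy
    rw [hy, sign_pos hd, one_mul]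

lemma exists_sign_flip_of_deriv_ne_zero {l m r : ℝ} (hm : f m = 0) (hd : deriv f m ≠ 0)
    (hl : l < m) (hr : m < r) :
    ∃ c ∈ Ioo l m, ∃ e ∈ Ioo m r,
      sign (f c) = -sign (deriv f m) ∧ sign (f e) = sign (deriv f m) := by
  have hloc := eventually_sign_eq_of_deriv_ne_zero hm hd
  obtain ⟨c, hc, hcI⟩ := ((hloc.filter_mono nhdsWithin_le_nhds).and (Ioo_mem_nhdsLT hl)).exists
  obtain ⟨e, he, heI⟩ := ((hloc.filter_mono nhdsWithin_le_nhds).and (Ioo_mem_nhdsGT hr)).exists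
  refine ⟨c, hcI, e, heI, ?_, ?_⟩
  · rw [hc, sign_neg (sub_neg.2 hcI.2), mul_neg_one]
  · rw [he, sign_pos (sub_pos.2 heI.1), mul_one]

theorem sign_eq_sign_iff_even_card_zeros (hd : Differentiable ℝ f)
    (hs : ∀ y, f y = 0 → deriv f y ≠ 0) {a : ℝ} (ha : f a ≠ 0) (Z : Finset ℝ) :
    ∀ b, a ≤ b → f b ≠ 0 → (∀ y, y ∈ Z ↔ y ∈ Ioo a b ∧ f y = 0) →
      (sign (f a) = sign (f b) ↔ Even Z.card) := by
  induction Z using Finset.induction_on_max with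
  | empty =>
    intro b hab hb hZ
    refine iff_of_true (sign_eq_sign_of_forall_mem_Ioo_ne_zero hab hd.continuous.continuousOn
      ha hb fun y hy hy0 => ?_) Even.zero
    simpa using (hZ y).2 ⟨hy, hy0⟩
  | insert m Z hlt ih =>
    intro b hab hb hZ
    obtain ⟨⟨ham, hmb⟩, hm0⟩ := (hZ m).1 (Finset.mem_insert_self m Z)
    have hdm := hs m hm0
    -- `c` is taken to the right of `a` and of all the other zeros
    have hl : ∀ x ∈ insert a Z, x < m := by simpa [ham] using hlt
    obtain ⟨c, ⟨hlc, hcm⟩, e, ⟨hme, heb⟩, hc, he⟩ := exists_sign_flip_of_deriv_ne_zero hm0 hdm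
      ((Finset.max'_lt_iff _ (Finset.insert_nonempty a Z)).2 hl) hmb
    have hlt_c : ∀ x ∈ insert a Z, x < c := fun x hx => (Finset.le_max' _ x hx).trans_lt hlc
    have hac : a < c := hlt_c a (Finset.mem_insert_self a Z)
    have hc0 : f c ≠ 0 :=
      sign_ne_zero.1 (by rwa [hc, Ne, SignType.neg_eq_zero_iff, sign_eq_zero_iff])
    have hZc : ∀ y, y ∈ Z ↔ y ∈ Ioo a c ∧ f y = 0 := by
      intro y
      constructor
      · intro hy
        obtain ⟨⟨hay, -⟩, hy0⟩ := (hZ y).1 (Finset.mem_insert_of_mem hy)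
        exact ⟨⟨hay, hlt_c y (Finset.mem_insert_of_mem hy)⟩, hy0⟩
      · rintro ⟨⟨hay, hyc⟩, hy0⟩
        exact (Finset.mem_insert.1 ((hZ y).2 ⟨⟨hay, hyc.trans (hcm.trans hmb)⟩, hy0⟩)).resolve_left
          (hyc.trans hcm).ne
    have heb' : sign (f e) = sign (f b) := by
      refine sign_eq_sign_of_forall_mem_Ioo_ne_zero heb.le hd.continuous.continuousOn
        (sign_ne_zero.1 (he ▸ sign_ne_zero.2 hdm)) hb fun y hy hy0 => ?_
      have hmy : m < y := hme.trans hy.1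
      rcases Finset.mem_insert.1 ((hZ y).2 ⟨⟨ham.trans hmy, hy.2⟩, hy0⟩) with rfl | hyZ
      · exact hmy.false
      · exact (hlt y hyZ).not_gt hmy
    rw [Finset.card_insert_of_notMem fun hm => (hlt m hm).false, Nat.even_add_one,
      ← ih c hac.le hc0 hZc, ← heb', he, hc]
    exact SignType.eq_iff_ne_neg (sign_ne_zero.2 ha) (sign_ne_zero.2 hdm)

end SignChanges

theorem finite_and_odd_ncard_setOf_eq {f : ℝ → ℝ} (hf : Differentiable ℝ f) {x a b : ℝ}
    (hs : ∀ y, f y = x → deriv f y ≠ 0) (hab : a ≤ b) (ha : f a < x) (hb : x < f b)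
    (hsub : {y | f y = x} ⊆ Ioo a b) :
    {y | f y = x}.Finite ∧ Odd {y | f y = x}.ncard := by
  have hfin : {y | f y = x}.Finite := by
    refine (isCompact_Icc.of_isClosed_subset (isClosed_eq hf.continuous continuous_const)
      (hsub.trans Ioo_subset_Icc_self)).finite (isDiscrete_iff_nhdsNE.2 fun y hy => ?_)
    rw [← eventually_false_iff_eq_bot, eventually_inf_principal]
    filter_upwards [(hf y).hasDerivAt.eventually_ne (c := x) (hs y hy)] with z hz hzx
    exact hz hzx
  refine ⟨hfin, ?_⟩
  have hd : Differentiable ℝ (f · - x) := hf.sub_const x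
  have hparity := sign_eq_sign_iff_even_card_zeros hd
    (fun y hy => by rw [deriv_sub_const]; exact hs y (sub_eq_zero.1 hy)) (sub_neg.2 ha).ne
    hfin.toFinset b hab (sub_pos.2 hb).ne' fun y => by
      simpa [sub_eq_zero] using fun hy => hsub hy
  rw [ncard_eq_toFinset_card _ hfin, ← Nat.not_even_iff_odd, ← hparity,
    sign_neg (sub_neg.2 ha), sign_pos (sub_pos.2 hb)]
  decide

lemma isCompact_preimage_singleton_of_tendsto_cocompact {X Y : Type*} [TopologicalSpace X]
    [TopologicalSpace Y] [T1Space Y] {g : X → Y} {c l : Y} (hg : Continuous g)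
    (hl : Tendsto g (cocompact X) (𝓝 l)) (hc : l ≠ c) : IsCompact (g ⁻¹' {c}) := by
  obtain ⟨K, hK, hgK⟩ := mem_cocompact.1 (hl (isOpen_ne.mem_nhds hc))
  exact hK.of_isClosed_subset (isClosed_singleton.preimage hg)
    fun y hy => by_contra fun hyK => hgK hyK hy

lemma volume_image_eq_zero_of_hasDerivWithinAt_zero {f : ℝ → ℝ} {s : Set ℝ}
    (hf : ∀ y ∈ s, HasDerivWithinAt f 0 s y) : volume (f '' s) = 0 :=
  addHaar_image_eq_zero_of_det_fderivWithin_eq_zero volume (f' := fun _ => 0)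
    (fun y hy => by simpa using (hf y hy).hasFDerivWithinAt) fun _ _ => by simp

lemma tendsto_inner_zero_of_tendsto_zero_of_norm_le {ι E : Type*} [NormedAddCommGroup E]
    [InnerProductSpace ℝ E] {l : Filter ι} {u v : ι → E} {C : ℝ} (hu : Tendsto u l (𝓝 0))
    (hv : ∀ i, ‖v i‖ ≤ C) : Tendsto (fun i => inner ℝ (u i) (v i)) l (𝓝 0) := by
  refine squeeze_zero_norm (fun i => (norm_inner_le_norm _ _).trans
    (mul_le_mul_of_nonneg_left (hv i) (norm_nonneg _))) ?_
  simpa using hu.norm.mul_const C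

lemma exists_norm_le_of_tendsto_cocompact_zero {X E : Type*} [TopologicalSpace X]
    [NormedAddCommGroup E] {u : X → E} (hu : Continuous u)
    (h0 : Tendsto u (cocompact X) (𝓝 0)) : ∃ M, ∀ x, ‖u x‖ ≤ M := by
  obtain ⟨M, hM⟩ := isBounded_iff_forall_norm_le.1
    (⟨⟨u, hu⟩, h0⟩ : ZeroAtInftyContinuousMap X E).isBounded_range
  exact ⟨M, fun x => hM _ (mem_range_self x)⟩

theorem stmt_7_general (σ : ℝ) (u₀ : ℝ → ℂ)
    (hC1 : ContDiff ℝ 1 u₀)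
    (hlim : Tendsto u₀ (Filter.cocompact ℝ) (nhds 0))
    (C : ℝ) (hbd : ∀ y, ‖deriv u₀ y‖ ≤ C) (t : ℝ) :
    let γ : ℝ → ℝ := fun y => y - σ * (2 * t) * ‖u₀ y‖ ^ 2
    let K : Set ℝ := γ '' {y | deriv γ y = 0}
    IsCompact K ∧ volume K = 0 ∧
      ∀ x : ℝ, x ∉ K →
        {y | γ y = x}.Finite ∧ Odd {y | γ y = x}.ncard ∧
          ∀ y, γ y = x → deriv γ y ≠ 0 := by
  intro γ K
  have hγC1 : ContDiff ℝ 1 γ := contDiff_id.sub (contDiff_const.mul (hC1.norm_sq (𝕜 := ℂ)))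
  have hγ : Differentiable ℝ γ := hγC1.differentiable one_ne_zero
  have hdγ : deriv γ = fun y => 1 - σ * (2 * t) * (2 * inner ℝ (u₀ y) (deriv u₀ y)) :=
    funext fun y => ((hasDerivAt_id y).sub
      ((hC1.differentiable one_ne_zero y).hasDerivAt.norm_sq.const_mul _)).deriv
  have hdγ_lim : Tendsto (deriv γ) (cocompact ℝ) (𝓝 1) := by
    have h := ((tendsto_inner_zero_of_tendsto_zero_of_norm_le hlim hbd).const_mul
      (σ * (2 * t) * 2)).const_sub 1
    rw [hdγ]
    simpa [mul_assoc] using h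
  obtain ⟨M, hM⟩ := exists_norm_le_of_tendsto_cocompact_zero hC1.continuous hlim
  set B := |σ * (2 * t)| * M ^ 2
  have hB : 0 ≤ B := by positivity
  have hγ_near : ∀ y, |γ y - y| ≤ B := fun y => by
    simp only [γ, sub_sub_cancel_left, abs_neg, abs_mul, abs_pow, abs_norm, B]
    gcongr
    exact hM y
  refine ⟨(isCompact_preimage_singleton_of_tendsto_cocompact (hγC1.continuous_deriv le_rfl)
    hdγ_lim one_ne_zero).image hγ.continuous, volume_image_eq_zero_of_hasDerivWithinAt_zero
    fun y hy => hy ▸ (hγ y).hasDerivAt.hasDerivWithinAt, fun x hx => ?_⟩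
  have hs : ∀ y, γ y = x → deriv γ y ≠ 0 := fun y hyx hy => hx ⟨y, hy, hyx⟩
  have hsub : {y | γ y = x} ⊆ Ioo (x - B - 1) (x + B + 1) := fun y (hy : γ y = x) => by
    have := abs_le.1 (hγ_near y)
    constructor <;> linarith
  have ha := abs_le.1 (hγ_near (x - B - 1))
  have hb := abs_le.1 (hγ_near (x + B + 1))
  obtain ⟨hfin, hodd⟩ := finite_and_odd_ncard_setOf_eq hγ hs (by linarith) (by linarith)
    (by linarith) hsub
  exact ⟨hfin, hodd, hs⟩

/-- For `u₀` of class `C¹` tending to `0` at infinity with bounded derivative and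
`γₜ(y) = y ∓ 2t|u₀(y)|²`: the set of critical values of `γₜ` is compact and Lebesgue-null,
and for every `x` which is not a critical value, the equation `γₜ(y) = x` has a finite odd
number of real solutions, each simple. -/
theorem stmt_7 (σ : ℝ) (hσ : σ = 1 ∨ σ = -1) (u₀ : ℝ → ℂ)
    (hC1 : ContDiff ℝ 1 u₀)
    (hlim : Tendsto u₀ (Filter.cocompact ℝ) (nhds 0))
    (C : ℝ) (hbd : ∀ y, ‖deriv u₀ y‖ ≤ C) (t : ℝ) :
    let γ : ℝ → ℝ := fun y => y - σ * (2 * t) * ‖u₀ y‖ ^ 2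
    let K : Set ℝ := γ '' {y | deriv γ y = 0}
    IsCompact K ∧ volume K = 0 ∧
      ∀ x : ℝ, x ∉ K →
        {y | γ y = x}.Finite ∧ Odd {y | γ y = x}.ncard ∧
          ∀ y, γ y = x → deriv γ y ≠ 0 :=
  stmt_7_general σ u₀ hC1 hlim C hbd t
end
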